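/- arXiv:2604.10206 — 9 statements merged into one kernel-verified Lean document; each statement's English description precedes it below -/
import Mathlib

section
/- Every nonzero right ideal I of a C*-algebra A (not necessarily closed) contains a nonzero norm-closed right ideal K of A. -/
/-- Every nonzero right ideal `I` of a C*-algebra `A` (not necessarily
closed) contains a nonzero norm-closed right ideal `K` of `A`. Right ideals are modelled
as (complex) linear subspaces `I` with `I * A ⊆ I`. -/
theorem exists_closed_right_ideal_le {A : Type*} [CStarAlgebra A]
    (I : Submodule ℂ A) (hI : ∀ x ∈ I, ∀ a : A, x * a ∈ I) (hIne : I ≠ ⊥) :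
    ∃ K : Submodule ℂ A,
      IsClosed (K : Set A) ∧ (∀ x ∈ K, ∀ a : A, x * a ∈ K) ∧ K ≠ ⊥ ∧ K ≤ I := by
  letI := CStarAlgebra.spectralOrder A
  haveI := CStarAlgebra.spectralOrderedRing A
  obtain ⟨x, hxI, hx0⟩ := (Submodule.ne_bot_iff I).mp hIne
  have : Nontrivial A := ⟨x, 0, hx0⟩
  set b : A := x * star x with hbdef
  have hbI : b ∈ I := hI x hxI (star x)
  have hb0 : b ≠ 0 := by
    simpa [hbdef, CStarRing.mul_star_self_eq_zero_iff] using hx0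
  have hbnn : (0 : A) ≤ b := mul_star_self_nonneg x
  have hbsa : IsSelfAdjoint b := .of_nonneg hbnn
  have hbnorm : (0 : ℝ) < ‖b‖ := norm_pos_iff.mpr hb0
  set ε : ℝ := ‖b‖ / 2 with hεdef
  have hε : 0 < ε := by positivity
  set g : ℝ → ℝ := fun t => max (t - ε) 0 with hgdef
  set q : ℝ → ℝ := fun t => (max t ε)⁻¹ with hqdef
  set f : ℝ → ℝ := fun t => t * (max t ε)⁻¹ with hfdef
  have hmaxne : ∀ t : ℝ, max t ε ≠ 0 := fun t =>
    ne_of_gt (lt_of_lt_of_le hε (le_max_right _ _))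
  have hgc : Continuous g := (continuous_id.sub continuous_const).max continuous_const
  have hqc : Continuous q :=
    ((continuous_id.max continuous_const).inv₀ hmaxne)
  have hfc : Continuous f := continuous_id.mul hqc
  set y : A := cfc g b with hydef
  set e : A := cfc f b with hedef
  -- pointwise identities
  have hgf : ∀ t : ℝ, g t * f t = g t := by
    intro t
    rcases le_or_gt t ε with h | h
    · simp [hgdef, max_eq_right (by linarith : t - ε ≤ 0)]
    · have ht0 : t ≠ 0 := ne_of_gt (lt_trans hε h)
      simp [hgdef, hfdef, max_eq_left h.le, ht0]
  have hid : ∀ t : ℝ, t * (g t * q t) = g t := by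
    intro t
    rcases le_or_gt t ε with h | h
    · simp [hgdef, max_eq_right (by linarith : t - ε ≤ 0)]
    · have ht0 : t ≠ 0 := ne_of_gt (lt_trans hε h)
      rw [hgdef, hqdef]
      simp only [max_eq_left h.le, max_eq_left (by linarith : (0:ℝ) ≤ t - ε)]
      field_simp
  have hye : y * e = y := by
    rw [hydef, hedef, ← cfc_mul g f b hgc.continuousOn hfc.continuousOn]
    exact cfc_congr fun t _ => hgf t
  have hey : e * y = y := by
    rw [hydef, hedef, ← cfc_mul f g b hfc.continuousOn hgc.continuousOn]
    exact cfc_congr fun t _ => by rw [mul_comm]; exact hgf t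
  -- `e = b * cfc q b`
  have heq : e = b * cfc q b := by
    rw [hedef, show f = fun t => id t * q t from rfl,
      cfc_mul id q b continuous_id.continuousOn hqc.continuousOn, cfc_id ℝ b hbsa]
  -- `y ∈ I`
  have hyI : y ∈ I := by
    have hy' : y = b * cfc (fun t => g t * q t) b := by
      calc y = cfc (fun t : ℝ => id t * (g t * q t)) b :=
              cfc_congr fun t _ => (hid t).symm
        _ = cfc id b * cfc (fun t => g t * q t) b :=
              cfc_mul id (fun t => g t * q t) b continuous_id.continuousOn
                (hgc.mul hqc).continuousOn
        _ = b * cfc (fun t => g t * q t) b := by rw [cfc_id ℝ b hbsa]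
    rw [hy']
    exact hI b hbI _
  -- `y ≠ 0`
  have hy0 : y ≠ 0 := by
    intro h
    have h' : cfc g b = cfc (fun _ : ℝ => (0 : ℝ)) b := by
      rw [← hydef, h, cfc_const_zero]
    have heqon := eqOn_of_cfc_eq_cfc (a := b) h' hgc.continuousOn
      continuousOn_const hbsa
    have hmem : ‖b‖ ∈ spectrum ℝ b := CStarAlgebra.norm_mem_spectrum_of_nonneg hbnn
    have := heqon hmem
    rw [hgdef] at this
    simp only [hεdef] at this
    have : max (‖b‖ - ‖b‖ / 2) 0 = 0 := this
    rw [max_eq_left (by linarith)] at this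
    linarith
  -- the closed right ideal
  set S : Submodule ℂ A := LinearMap.range (LinearMap.mulLeft ℂ y) with hSdef
  have hmemS : ∀ z, z ∈ S ↔ ∃ c : A, y * c = z := by
    intro z
    simp [hSdef, LinearMap.mem_range, LinearMap.mulLeft_apply]
  refine ⟨S.topologicalClosure, S.isClosed_topologicalClosure, ?_, ?_, ?_⟩
  · -- right ideal
    intro z hz a
    have hz' : z ∈ closure (S : Set A) := hz
    have hcont : Continuous fun w : A => w * a := continuous_id.mul continuous_const
    have h2 : z * a ∈ closure ((fun w : A => w * a) '' (S : Set A)) :=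
      map_mem_closure (f := fun w : A => w * a) hcont hz' (Set.mapsTo_image _ _)
    refine closure_mono ?_ h2
    rintro _ ⟨w, hw, rfl⟩
    obtain ⟨c, rfl⟩ := (hmemS w).mp hw
    exact (hmemS _).mpr ⟨c * a, (mul_assoc y c a).symm⟩
  · -- nonzero
    have hyS : y ∈ S := (hmemS y).mpr ⟨e, hye⟩
    exact (Submodule.ne_bot_iff _).mpr ⟨y, S.le_topologicalClosure hyS, hy0⟩
  · -- contained in I
    intro z hz
    have hz' : z ∈ closure (S : Set A) := hz
    have hC : ∀ w ∈ closure (S : Set A), e * w = w := by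
      have hclosed : IsClosed {w : A | e * w = w} :=
        isClosed_eq (continuous_const.mul continuous_id) continuous_id
      intro w hw
      refine hclosed.closure_subset_iff.mpr ?_ hw
      rintro w' hw'
      obtain ⟨c, rfl⟩ := (hmemS w').mp hw'
      show e * (y * c) = y * c
      rw [← mul_assoc, hey]
    have hez : e * z = z := hC z hz'
    have : z = b * (cfc q b * z) := by
      rw [← mul_assoc, ← heq, hez]
    rw [this]
    exact hI b hbI _
end

section
/- Let A be a C*-algebra and J ⊂ A a closed right ideal. If J is topologically essential (i.e. J ∩ K ≠ 0 for every nonzero closed right ideal K of A), then J is essential (i.e. J ∩ I ≠ 0 for every nonzero, not necessarily closed, right ideal I of A). -/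
/-- Let `A` be a C*-algebra and `J ⊆ A` a closed right ideal. If `J` is
topologically essential (it meets every nonzero norm-closed right ideal nontrivially),
then `J` is essential (it meets every nonzero, not necessarily closed, right ideal
nontrivially). Right ideals are modelled as complex linear subspaces stable under right
multiplication by `A`. -/
theorem essential_of_topologicallyEssential_right_ideal {A : Type*} [CStarAlgebra A]
    (J : Submodule ℂ A) (hJr : ∀ x ∈ J, ∀ a : A, x * a ∈ J) (hJc : IsClosed (J : Set A))
    (hTE : ∀ K : Submodule ℂ A, (∀ x ∈ K, ∀ a : A, x * a ∈ K) → IsClosed (K : Set A) →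
      K ≠ ⊥ → ∃ v, v ∈ J ⊓ K ∧ v ≠ 0) :
    ∀ I : Submodule ℂ A, (∀ x ∈ I, ∀ a : A, x * a ∈ I) → I ≠ ⊥ →
      ∃ v, v ∈ J ⊓ I ∧ v ≠ 0 := by
  -- Strategy: given a nonzero right ideal `I`, pick `0 ≠ y ∈ I` and set `c := y * star y ∈ I`.
  -- Using continuous functional calculus, let `a := (c² - δ²)₊` with `δ = ‖c‖/2`; then the
  -- closed right ideal `K := closure (a • A)` is nonzero, and every `x ∈ K` satisfies
  -- `e * x = x` where `e = c * g₁(c)` for a continuous `g₁`. Hence every element of `K` lies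
  -- in `c * A ⊆ I`, i.e. `K ⊆ I`. Topological essentiality of `J` applied to `K` finishes.
  intro I hIr hI0
  obtain ⟨y, hyI, hy0⟩ := (Submodule.ne_bot_iff I).mp hI0
  set c : A := y * star y with hc_def
  have hc_sa : IsSelfAdjoint c := IsSelfAdjoint.mul_star_self y
  have hnc : ‖c‖ = ‖y‖ * ‖y‖ := by
    have h1 := CStarRing.norm_star_mul_self (x := star y)
    rwa [star_star, norm_star] at h1
  have hc0 : c ≠ 0 := by
    intro h
    rw [h, norm_zero] at hnc
    exact hy0 (norm_eq_zero.mp (mul_self_eq_zero.mp hnc.symm))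
  have hR : (0:ℝ) < ‖c‖ := norm_pos_iff.mpr hc0
  set δ : ℝ := ‖c‖ / 2 with hδ_def
  have hδ : (0:ℝ) < δ := by positivity
  -- auxiliary continuous functions
  set f : ℝ → ℝ := fun t => max (t^2 - δ^2) 0 with hf_def
  set g₁ : ℝ → ℝ := fun t => t * (max (t^2) (δ^2))⁻¹ with hg₁_def
  have hmaxpos : ∀ t : ℝ, 0 < max (t^2) (δ^2) := fun t =>
    lt_of_lt_of_le (by positivity) (le_max_right _ _)
  have hf_cont : Continuous f := ((continuous_pow 2).sub continuous_const).max continuous_const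
  have hg₁_cont : Continuous g₁ :=
    continuous_id.mul (((continuous_pow 2).max continuous_const).inv₀ fun t => (hmaxpos t).ne')
  set a : A := cfc f c with ha_def
  set w : A := cfc g₁ c with hw_def
  set e : A := cfc (fun t => t * g₁ t) c with he_def
  have he : e = c * w := by
    rw [he_def, hw_def,
      cfc_mul (fun t : ℝ => t) g₁ c continuous_id.continuousOn hg₁_cont.continuousOn,
      cfc_id' (R := ℝ) c]
  have hea : e * a = a := by
    rw [he_def, ha_def, ← cfc_mul (fun t : ℝ => t * g₁ t) f c
      (continuous_id.mul hg₁_cont).continuousOn hf_cont.continuousOn]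
    apply cfc_congr
    intro t _
    show (t * g₁ t) * f t = f t
    rcases le_or_gt (t^2) (δ^2) with h | h
    · have hft : f t = 0 := max_eq_right (by linarith)
      rw [hft, mul_zero]
    · have h2 : max (t^2) (δ^2) = t^2 := max_eq_left h.le
      have ht2 : t^2 ≠ 0 := by
        intro h0; rw [h0] at h; exact absurd h (not_lt.mpr (by positivity))
      rw [hg₁_def]
      simp only [h2]
      rw [show t * (t * (t^2)⁻¹) = t^2 * (t^2)⁻¹ by ring, mul_inv_cancel₀ ht2, one_mul]
  have ha0 : a ≠ 0 := by
    intro h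
    have hcc : c * c = cfc (fun t : ℝ => t^2) c := by
      have h2 : cfc (fun t : ℝ => t^2) c = cfc (fun t : ℝ => t * t) c := by
        apply cfc_congr; intro t _; ring
      rw [h2, cfc_mul (fun t : ℝ => t) (fun t : ℝ => t) c continuous_id.continuousOn
        continuous_id.continuousOn, cfc_id' (R := ℝ) c]
    have hsub : c * c - a = cfc (fun t : ℝ => t^2 - f t) c := by
      rw [cfc_sub _ _ c (continuous_pow 2).continuousOn hf_cont.continuousOn, ← hcc, ha_def]
    have hbound : ‖c * c - a‖ ≤ δ^2 := by
      rw [hsub]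
      apply norm_cfc_le (by positivity)
      intro x _
      rw [Real.norm_eq_abs, abs_le]
      have hδ2 := sq_nonneg δ
      have hx2 := sq_nonneg x
      constructor
      · rcases le_or_gt (x^2) (δ^2) with hx | hx
        · have hfx : f x = 0 := max_eq_right (by linarith)
          rw [hfx, sub_zero]; linarith
        · have hfx : f x = x^2 - δ^2 := max_eq_left (by linarith)
          rw [hfx]; linarith
      · have hfx : x^2 - δ^2 ≤ f x := le_max_left _ _
        linarith
    rw [h, sub_zero] at hbound
    have hninq : ‖c * c‖ = ‖c‖ * ‖c‖ := by
      rw [← CStarRing.norm_star_mul_self (x := c), hc_sa.star_eq]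
    rw [hninq, hδ_def] at hbound
    nlinarith
  -- the closed right ideal K generated by a
  set K0 : Submodule ℂ A := LinearMap.range (LinearMap.mulLeft ℂ a) with hK0_def
  set K : Submodule ℂ A := K0.topologicalClosure with hK_def
  have hKcoe : (K : Set A) = closure (K0 : Set A) := Submodule.topologicalClosure_coe K0
  have hK0sub : ∀ x ∈ K0, ∃ b : A, x = a * b := by
    rintro x ⟨b, rfl⟩; exact ⟨b, by simp⟩
  have hK0mem : ∀ b : A, a * b ∈ K0 := fun b => ⟨b, by simp⟩
  have hKr : ∀ x ∈ K, ∀ b : A, x * b ∈ K := by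
    intro x hx b
    have hx' : x ∈ closure (K0 : Set A) := by rw [← hKcoe]; exact hx
    have hmem : x * b ∈ closure (K0 : Set A) := by
      refine map_mem_closure (f := (· * b)) (continuous_mul_right b) hx' ?_
      intro z hz
      obtain ⟨u, rfl⟩ := hK0sub z hz
      show a * u * b ∈ (K0 : Set A)
      rw [mul_assoc]
      exact hK0mem (u * b)
    show x * b ∈ (K : Set A)
    rw [hKcoe]; exact hmem
  have hKc : IsClosed (K : Set A) := by
    rw [hKcoe]; exact isClosed_closure
  have haK : a ∈ K := K0.le_topologicalClosure (by simpa using hK0mem 1)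
  have hKne : K ≠ ⊥ := (Submodule.ne_bot_iff K).mpr ⟨a, haK, ha0⟩
  obtain ⟨v, ⟨hvJ, hvK⟩, hv0⟩ := hTE K hKr hKc hKne
  -- e is a left unit for K
  have hev : e * v = v := by
    have hclosed : IsClosed {x : A | e * x = x} :=
      isClosed_eq (continuous_const.mul continuous_id) continuous_id
    have hsub : (K0 : Set A) ⊆ {x : A | e * x = x} := by
      intro z hz
      obtain ⟨u, rfl⟩ := hK0sub z hz
      show e * (a * u) = a * u
      rw [← mul_assoc, hea]
    have hv' : v ∈ closure (K0 : Set A) := by rw [← hKcoe]; exact hvK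
    exact closure_minimal hsub hclosed hv'
  have hvI : v ∈ I := by
    have hvy : v = y * (star y * (w * v)) := by
      rw [← mul_assoc, ← mul_assoc, ← hc_def, ← he, hev]
    rw [hvy]
    exact hIr y hyI _
  exact ⟨v, ⟨hvJ, hvI⟩, hv0⟩
end

section
/- Let M be a Hilbert C*-module over a C*-algebra A, N ⊂ M a closed submodule, and J_N = {T ∈ K(M) : Ran T ⊂ N} the associated closed right ideal of the algebra of compact operators K(M). If N is topologically essential in M, then J_N is a topologically essential right ideal of K(M). -/
open Filter Topology

/-- A (right) Hilbert C*-module structure on a complex normed space `M` over the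
C*-algebra `A`: a right `A`-action `smul`, an `A`-valued inner product `inner`
(linear in the second variable), together with the compatibility and norm axioms,
and the rank-one ("theta") operators `Θ_{x,y} : z ↦ x⟨y,z⟩`, bundled as bounded
operators on `M`. -/
structure HilbertCStarModule (A : Type*) (M : Type*) [NonUnitalCStarAlgebra A]
    [PartialOrder A] [StarOrderedRing A]
    [NormedAddCommGroup M] [NormedSpace ℂ M] where
  /-- the right action of `A` on `M` -/
  smul : M → A → M
  /-- the `A`-valued inner product -/
  inner : M → M → A
  add_smul : ∀ x y a, smul (x + y) a = smul x a + smul y a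
  smul_add : ∀ x a b, smul x (a + b) = smul x a + smul x b
  smul_smul : ∀ x a b, smul (smul x a) b = smul x (a * b)
  smul_zero : ∀ x, smul x 0 = 0
  zero_smul : ∀ a, smul 0 a = 0
  csmul_smul : ∀ (c : ℂ) x a, smul (c • x) a = c • smul x a
  smul_csmul : ∀ (c : ℂ) x a, smul x (c • a) = c • smul x a
  inner_add_left : ∀ x y z, inner (x + y) z = inner x z + inner y z
  inner_add_right : ∀ x y z, inner x (y + z) = inner x y + inner x z
  inner_csmul_right : ∀ (c : ℂ) x y, inner x (c • y) = c • inner x y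
  inner_smul_right : ∀ x y a, inner x (smul y a) = inner x y * a
  star_inner : ∀ x y, star (inner x y) = inner y x
  inner_self_nonneg : ∀ x, 0 ≤ inner x x
  inner_self_eq_zero : ∀ x, inner x x = 0 → x = 0
  norm_sq_eq : ∀ x, ‖x‖ ^ 2 = ‖inner x x‖
  norm_inner_le : ∀ x y, ‖inner x y‖ ≤ ‖x‖ * ‖y‖
  norm_smul_le : ∀ x a, ‖smul x a‖ ≤ ‖x‖ * ‖a‖
  /-- the rank-one operator `Θ_{x,y}` as a bounded operator on `M` -/
  theta : M → M → (M →L[ℂ] M)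
  theta_apply : ∀ x y z, theta x y z = smul x (inner y z)

variable {A M : Type*} [NonUnitalCStarAlgebra A] [PartialOrder A] [StarOrderedRing A]
  [NormedAddCommGroup M] [NormedSpace ℂ M]

/-- The algebra `K(M)` of "compact" operators on the Hilbert C*-module `M`: the norm
closure, inside the bounded operators on `M`, of the linear span of the rank-one
operators `Θ_{x,y}`. -/
noncomputable def compacts (h : HilbertCStarModule A M) : Set (M →L[ℂ] M) :=
  closure (Submodule.span ℂ {T : M →L[ℂ] M | ∃ x y : M, T = h.theta x y} : Set (M →L[ℂ] M))

/-- `J` is a closed right ideal of `K(M)`. -/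
def IsClosedRightIdeal (h : HilbertCStarModule A M) (J : Set (M →L[ℂ] M)) : Prop :=
  J ⊆ compacts h ∧ (0 : M →L[ℂ] M) ∈ J ∧
    (∀ S ∈ J, ∀ T ∈ J, S + T ∈ J) ∧ (∀ (c : ℂ), ∀ S ∈ J, c • S ∈ J) ∧
    (∀ S ∈ J, ∀ T ∈ compacts h, S.comp T ∈ J) ∧ IsClosed J

/-- The closed right ideal `J_N = {T ∈ K(M) : Ran T ⊆ N}` associated with a closed
submodule `N ⊆ M`. -/
noncomputable def idealOf (h : HilbertCStarModule A M) (N : Submodule ℂ M) :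
    Set (M →L[ℂ] M) :=
  {T ∈ compacts h | ∀ z : M, T z ∈ N}

section Aux

variable (h : HilbertCStarModule A M)

/-- `smul` by a fixed algebra element as a continuous linear map. -/
noncomputable def HilbertCStarModule.Lsmul (a : A) : M →L[ℂ] M :=
  LinearMap.mkContinuous
    { toFun := fun x => h.smul x a
      map_add' := fun x y => h.add_smul x y a
      map_smul' := fun c x => h.csmul_smul c x a }
    ‖a‖ (fun x => by rw [mul_comm]; exact h.norm_smul_le x a)

@[simp] lemma HilbertCStarModule.Lsmul_apply (a : A) (x : M) :
    h.Lsmul a x = h.smul x a := rfl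

/-- `theta · y` as a continuous linear map into the operators. -/
noncomputable def HilbertCStarModule.thetaL (y : M) : M →L[ℂ] (M →L[ℂ] M) :=
  LinearMap.mkContinuous
    { toFun := fun x => h.theta x y
      map_add' := fun x x' => ContinuousLinearMap.ext fun w => by
        simp [h.theta_apply, h.add_smul]
      map_smul' := fun c x => ContinuousLinearMap.ext fun w => by
        simp [h.theta_apply, h.csmul_smul] }
    ‖y‖ (fun x => by
      refine ContinuousLinearMap.opNorm_le_bound _ (by positivity) fun w => ?_
      show ‖h.theta x y w‖ ≤ ‖y‖ * ‖x‖ * ‖w‖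
      rw [h.theta_apply]
      calc ‖h.smul x (h.inner y w)‖ ≤ ‖x‖ * ‖h.inner y w‖ := h.norm_smul_le _ _
        _ ≤ ‖x‖ * (‖y‖ * ‖w‖) := by
              have := h.norm_inner_le y w
              have hx : (0:ℝ) ≤ ‖x‖ := norm_nonneg _
              nlinarith [norm_nonneg (h.inner y w)]
        _ = ‖y‖ * ‖x‖ * ‖w‖ := by ring)

@[simp] lemma HilbertCStarModule.thetaL_apply (y x : M) :
    h.thetaL y x = h.theta x y := rfl

lemma HilbertCStarModule.theta_zero_left (y : M) : h.theta 0 y = 0 := by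
  ext w; simp [h.theta_apply, h.zero_smul]

lemma HilbertCStarModule.theta_mem_compacts (x y : M) :
    h.theta x y ∈ compacts h :=
  subset_closure (Submodule.subset_span ⟨x, y, rfl⟩)

/-- Every compact operator commutes with the `A`-action. -/
lemma HilbertCStarModule.compacts_smul_comm {T : M →L[ℂ] M} (hT : T ∈ compacts h)
    (z : M) (a : A) : T (h.smul z a) = h.smul (T z) a := by
  have hkey : compacts h ⊆ {T : M →L[ℂ] M | ∀ z a, T (h.smul z a) = h.smul (T z) a} := by
    apply closure_minimal
    · intro T hT
      induction hT using Submodule.span_induction with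
      | mem T hT =>
          obtain ⟨x, y, rfl⟩ := hT
          intro z a
          simp only [h.theta_apply, h.inner_smul_right, ← h.smul_smul]
      | zero => intro z a; simp [h.zero_smul]
      | add S T _ _ hS hT => intro z a; simp [hS z a, hT z a, h.add_smul]
      | smul c T _ hT => intro z a; simp [hT z a, h.csmul_smul]
    · have : {T : M →L[ℂ] M | ∀ z a, T (h.smul z a) = h.smul (T z) a} =
          ⋂ (z : M), ⋂ (a : A), {T : M →L[ℂ] M | T (h.smul z a) = h.smul (T z) a} := by
        ext T; simp [Set.mem_iInter]
      rw [this]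
      refine isClosed_iInter fun z => isClosed_iInter fun a => ?_
      exact isClosed_eq (ContinuousLinearMap.apply ℂ M (h.smul z a)).continuous
        ((h.Lsmul a).continuous.comp (ContinuousLinearMap.apply ℂ M z).continuous)
  exact hkey hT z a

lemma HilbertCStarModule.inner_zero_right (x : M) : h.inner x 0 = 0 := by
  have := h.inner_add_right x 0 0
  simpa using this.symm

end Aux

/-- Let `N` be a closed submodule of a Hilbert C*-module `M` over
`A` and `J_N = {T ∈ K(M) : Ran T ⊆ N}` the associated closed right ideal of the
algebra of compact operators `K(M)`. If `N` is topologically essential in `M` (meets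
every nonzero closed submodule nontrivially), then `J_N` is a topologically essential
right ideal of `K(M)` (meets every nonzero closed right ideal nontrivially). -/
theorem idealOf_topologicallyEssential (h : HilbertCStarModule A M)
    (N : Submodule ℂ M) (hNs : ∀ x ∈ N, ∀ a : A, h.smul x a ∈ N)
    (hNc : IsClosed (N : Set M))
    (hTE : ∀ K : Submodule ℂ M, (∀ x ∈ K, ∀ a : A, h.smul x a ∈ K) →
      IsClosed (K : Set M) → K ≠ ⊥ → ∃ v, v ∈ N ⊓ K ∧ v ≠ 0) :
    ∀ J : Set (M →L[ℂ] M), IsClosedRightIdeal h J → J ≠ {0} →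
      ∃ T, T ∈ idealOf h N ∩ J ∧ T ≠ 0 := by
  intro J hJ hJne
  obtain ⟨hJc, hJ0, hJadd, hJsmul, hJcomp, hJclosed⟩ := hJ
  -- a nonzero element of J
  have hex : ∃ T0 ∈ J, T0 ≠ (0 : M →L[ℂ] M) := by
    by_contra hc
    push_neg at hc
    exact hJne (Set.eq_singleton_iff_unique_mem.mpr ⟨hJ0, hc⟩)
  obtain ⟨T0, hT0J, hT0⟩ := hex
  have hez : ∃ z0, T0 z0 ≠ 0 := by
    by_contra hc
    push_neg at hc
    exact hT0 (ContinuousLinearMap.ext fun w => by simp [hc w])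
  obtain ⟨z0, hz0⟩ := hez
  -- the closed submodule generated by the ranges of elements of J
  set S : Set M := {w | ∃ T ∈ J, ∃ z, w = T z} with hSdef
  set K : Submodule ℂ M := (Submodule.span ℂ S).topologicalClosure with hKdef
  have hKcoe : (K : Set M) = closure (Submodule.span ℂ S : Set M) :=
    Submodule.topologicalClosure_coe _
  have hspan_maps : ∀ a : A,
      Set.MapsTo (h.Lsmul a) (Submodule.span ℂ S : Set M) (Submodule.span ℂ S : Set M) := by
    intro a w hw
    have hle : Submodule.span ℂ S ≤ (Submodule.span ℂ S).comap (h.Lsmul a : M →ₗ[ℂ] M) := by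
      rw [Submodule.span_le]
      rintro _ ⟨T, hTJ, z, rfl⟩
      refine Submodule.mem_comap.mpr (Submodule.subset_span ?_)
      refine ⟨T, hTJ, h.smul z a, ?_⟩
      simp [h.compacts_smul_comm (hJc hTJ) z a]
    exact hle hw
  have hKsmul : ∀ x ∈ K, ∀ a : A, h.smul x a ∈ K := by
    intro x hx a
    have hx' : x ∈ closure (Submodule.span ℂ S : Set M) := hx
    have : h.Lsmul a x ∈ closure (Submodule.span ℂ S : Set M) :=
      map_mem_closure (h.Lsmul a).continuous hx' (hspan_maps a)
    exact this
  have hKclosed : IsClosed (K : Set M) := Submodule.isClosed_topologicalClosure _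
  have hmemK : T0 z0 ∈ K :=
    Submodule.le_topologicalClosure _ (Submodule.subset_span ⟨T0, hT0J, z0, rfl⟩)
  have hKne : K ≠ ⊥ := by
    intro hb
    rw [hb, Submodule.mem_bot] at hmemK
    exact hz0 hmemK
  obtain ⟨v, hvNK, hv0⟩ := hTE K hKsmul hKclosed hKne
  obtain ⟨hvN, hvK⟩ := Submodule.mem_inf.mp hvNK
  -- `theta v v` belongs to J
  have hQclosed : IsClosed {x : M | h.theta x v ∈ J} := by
    have : {x : M | h.theta x v ∈ J} = (h.thetaL v) ⁻¹' J := by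
      ext x; simp [h.thetaL_apply]
    rw [this]
    exact hJclosed.preimage (h.thetaL v).continuous
  have hspanQ : (Submodule.span ℂ S : Set M) ⊆ {x : M | h.theta x v ∈ J} := by
    intro x hx
    induction hx using Submodule.span_induction with
    | mem w hw =>
        obtain ⟨T, hTJ, z, rfl⟩ := hw
        have heq : h.theta (T z) v = T.comp (h.theta z v) := by
          ext w
          simp [h.theta_apply, h.compacts_smul_comm (hJc hTJ) z]
        show h.theta (T z) v ∈ J
        rw [heq]
        exact hJcomp T hTJ _ (h.theta_mem_compacts z v)
    | zero =>
        show h.theta 0 v ∈ J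
        rw [h.theta_zero_left]
        exact hJ0
    | add x y _ _ hx hy =>
        show h.theta (x + y) v ∈ J
        have : h.theta (x + y) v = h.theta x v + h.theta y v := by
          ext w; simp [h.theta_apply, h.add_smul]
        rw [this]
        exact hJadd _ hx _ hy
    | smul c x _ hx =>
        show h.theta (c • x) v ∈ J
        have : h.theta (c • x) v = c • h.theta x v := by
          ext w; simp [h.theta_apply, h.csmul_smul]
        rw [this]
        exact hJsmul c _ hx
  have hθJ : h.theta v v ∈ J := by
    have hv' : v ∈ closure (Submodule.span ℂ S : Set M) := hvK
    exact closure_minimal hspanQ hQclosed hv'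
  -- `theta v v` belongs to `idealOf h N`
  have hθN : h.theta v v ∈ idealOf h N := by
    refine ⟨h.theta_mem_compacts v v, fun z => ?_⟩
    rw [h.theta_apply]
    exact hNs v hvN _
  -- `theta v v ≠ 0`
  have hθne : h.theta v v ≠ 0 := by
    intro heq
    set a : A := h.inner v v with ha
    have ha0 : a ≠ 0 := fun hz => hv0 (h.inner_self_eq_zero v hz)
    have hsm : h.smul v a = 0 := by
      have : h.theta v v v = 0 := by rw [heq]; rfl
      rwa [h.theta_apply] at this
    have haa : a * a = 0 := by
      have := h.inner_smul_right v v a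
      rw [hsm, h.inner_zero_right] at this
      exact this.symm
    have hnorm : ‖a‖ * ‖a‖ = 0 := by
      have hstar : star a = a := by rw [ha, h.star_inner]
      calc ‖a‖ * ‖a‖ = ‖star a * a‖ := (CStarRing.norm_star_mul_self).symm
        _ = ‖a * a‖ := by rw [hstar]
        _ = 0 := by rw [haa, norm_zero]
    have : ‖a‖ = 0 := by nlinarith [norm_nonneg a]
    exact ha0 (norm_eq_zero.mp this)
  exact ⟨h.theta v v, ⟨hθN, hθJ⟩, hθne⟩
end

section
/- Let M be a Hilbert C*-module over a C*-algebra A, N ⊂ M a closed submodule, and J_N = {T ∈ K(M) : Ran T ⊂ N}. If J_N is a topologically essential closed right ideal of K(M), then N is a topologically essential submodule of M. -/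
open Filter Topology

variable {A M : Type*} [NonUnitalCStarAlgebra A] [PartialOrder A] [StarOrderedRing A]
  [NormedAddCommGroup M] [NormedSpace ℂ M]

noncomputable def compactsSub (h : HilbertCStarModule A M) : Submodule ℂ (M →L[ℂ] M) :=
  (Submodule.span ℂ {T : M →L[ℂ] M | ∃ x y : M, T = h.theta x y}).topologicalClosure

lemma compacts_eq (h : HilbertCStarModule A M) :
    compacts h = (compactsSub h : Set (M →L[ℂ] M)) := rfl

lemma hcsm_inner_zero (h : HilbertCStarModule A M) (x : M) : h.inner x 0 = 0 := by
  have := h.inner_add_right x 0 0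
  simp only [add_zero] at this
  exact add_eq_left.mp this.symm

lemma smul_inner_self_ne_zero (h : HilbertCStarModule A M) {x : M} (hx : x ≠ 0) :
    h.smul x (h.inner x x) ≠ 0 := by
  intro hz
  apply hx
  apply h.inner_self_eq_zero
  set a := h.inner x x with ha
  have hsa : star a = a := h.star_inner x x
  have h2 : a * a = 0 := by
    have h3 := h.inner_smul_right x x a
    rw [hz, hcsm_inner_zero] at h3
    exact h3.symm
  have hn : ‖a‖ * ‖a‖ = 0 := by
    rw [← CStarRing.norm_star_mul_self, hsa, h2, norm_zero]
  have : ‖a‖ = 0 := by nlinarith [norm_nonneg a]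
  exact norm_eq_zero.mp this

lemma theta_comp_theta (h : HilbertCStarModule A M) (x y u v : M) :
    (h.theta x y).comp (h.theta u v) = h.theta (h.smul x (h.inner y u)) v := by
  ext z
  simp only [ContinuousLinearMap.comp_apply, h.theta_apply]
  rw [h.inner_smul_right, ← h.smul_smul]

lemma comp_mem_compacts (h : HilbertCStarModule A M) {S T : M →L[ℂ] M}
    (hS : S ∈ compacts h) (hT : T ∈ compacts h) : S.comp T ∈ compacts h := by
  rw [compacts_eq] at hS hT ⊢
  -- first reduce S to a generator
  have key : ∀ x y : M, (h.theta x y).comp T ∈ compactsSub h := by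
    intro x y
    -- reduce T to a generator
    have hclosed : IsClosed ((fun U : M →L[ℂ] M => (h.theta x y).comp U) ⁻¹'
        (compactsSub h : Set (M →L[ℂ] M))) :=
      IsClosed.preimage (ContinuousLinearMap.compL ℂ M M M (h.theta x y)).continuous
        (Submodule.span ℂ {T : M →L[ℂ] M | ∃ x y : M, T = h.theta x y}).isClosed_topologicalClosure
    have hsub : (Submodule.span ℂ {U : M →L[ℂ] M | ∃ p q : M, U = h.theta p q} :
        Set (M →L[ℂ] M)) ⊆ (fun U : M →L[ℂ] M => (h.theta x y).comp U) ⁻¹'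
        (compactsSub h : Set (M →L[ℂ] M)) := by
      intro U hU
      refine Submodule.span_induction (p := fun U _ => (h.theta x y).comp U ∈ compactsSub h)
        ?_ ?_ ?_ ?_ hU
      · rintro U ⟨p, q, rfl⟩
        rw [theta_comp_theta]
        exact Submodule.le_topologicalClosure _ (Submodule.subset_span ⟨_, _, rfl⟩)
      · simp only [ContinuousLinearMap.comp_zero]; exact Submodule.zero_mem _
      · intro a b _ _ ha hb
        rw [ContinuousLinearMap.comp_add]; exact Submodule.add_mem _ ha hb
      · intro c a _ ha
        rw [ContinuousLinearMap.comp_smul]; exact Submodule.smul_mem _ c ha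
    have := closure_minimal hsub hclosed
    exact this hT
  have hclosed2 : IsClosed ((fun U : M →L[ℂ] M => U.comp T) ⁻¹'
      (compactsSub h : Set (M →L[ℂ] M))) :=
    IsClosed.preimage ((ContinuousLinearMap.compL ℂ M M M).flip T).continuous
      (Submodule.span ℂ {T : M →L[ℂ] M | ∃ x y : M, T = h.theta x y}).isClosed_topologicalClosure
  have hsub2 : (Submodule.span ℂ {U : M →L[ℂ] M | ∃ p q : M, U = h.theta p q} :
      Set (M →L[ℂ] M)) ⊆ (fun U : M →L[ℂ] M => U.comp T) ⁻¹'
      (compactsSub h : Set (M →L[ℂ] M)) := by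
    intro U hU
    refine Submodule.span_induction (p := fun U _ => U.comp T ∈ compactsSub h)
      ?_ ?_ ?_ ?_ hU
    · rintro U ⟨p, q, rfl⟩; exact key p q
    · simp only [ContinuousLinearMap.zero_comp]; exact Submodule.zero_mem _
    · intro a b _ _ ha hb
      rw [ContinuousLinearMap.add_comp]; exact Submodule.add_mem _ ha hb
    · intro c a _ ha
      rw [ContinuousLinearMap.smul_comp]; exact Submodule.smul_mem _ c ha
  exact closure_minimal hsub2 hclosed2 hS

lemma idealOf_isClosedRightIdeal (h : HilbertCStarModule A M) (K : Submodule ℂ M)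
    (hKs : ∀ x ∈ K, ∀ a : A, h.smul x a ∈ K) (hKc : IsClosed (K : Set M)) :
    IsClosedRightIdeal h (idealOf h K) := by
  have hzero : (0 : M →L[ℂ] M) ∈ compacts h :=
    subset_closure (Submodule.zero_mem _)
  refine ⟨fun T hT => hT.1, ⟨hzero, fun z => by simp⟩, ?_, ?_, ?_, ?_⟩
  · rintro S ⟨hSc, hSr⟩ T ⟨hTc, hTr⟩
    rw [compacts_eq] at hSc hTc
    exact ⟨Submodule.add_mem _ hSc hTc, fun z => K.add_mem (hSr z) (hTr z)⟩
  · rintro c S ⟨hSc, hSr⟩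
    rw [compacts_eq] at hSc
    exact ⟨Submodule.smul_mem _ c hSc, fun z => K.smul_mem c (hSr z)⟩
  · rintro S ⟨hSc, hSr⟩ T hTc
    exact ⟨comp_mem_compacts h hSc hTc, fun z => hSr (T z)⟩
  · have heq : idealOf h K =
        compacts h ∩ ⋂ z : M, (fun T : M →L[ℂ] M => T z) ⁻¹' (K : Set M) := by
      ext T; simp [idealOf, Set.mem_iInter]
    rw [heq]
    refine IsClosed.inter isClosed_closure (isClosed_iInter fun z => ?_)
    exact hKc.preimage (ContinuousLinearMap.apply ℂ M z).continuous

/-- Let `N` be a closed submodule of a Hilbert C*-module `M` over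
`A` and `J_N = {T ∈ K(M) : Ran T ⊆ N}`. If `J_N` is a topologically essential closed
right ideal of `K(M)` (meets every nonzero closed right ideal nontrivially), then `N`
is a topologically essential submodule of `M` (meets every nonzero closed submodule
nontrivially). -/
theorem topologicallyEssential_of_idealOf (h : HilbertCStarModule A M)
    (N : Submodule ℂ M) (hNs : ∀ x ∈ N, ∀ a : A, h.smul x a ∈ N)
    (hNc : IsClosed (N : Set M))
    (hTEideal : ∀ J : Set (M →L[ℂ] M), IsClosedRightIdeal h J → J ≠ {0} →
      ∃ T, T ∈ idealOf h N ∩ J ∧ T ≠ 0) :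
    ∀ K : Submodule ℂ M, (∀ x ∈ K, ∀ a : A, h.smul x a ∈ K) →
      IsClosed (K : Set M) → K ≠ ⊥ → ∃ v, v ∈ N ⊓ K ∧ v ≠ 0 := by
  intro K hKs hKc hKne
  obtain ⟨x, hxK, hx0⟩ : ∃ x ∈ K, x ≠ 0 := by
    by_contra hc
    push_neg at hc
    exact hKne (by ext y; simp only [Submodule.mem_bot]; exact ⟨hc y, fun hy => hy ▸ K.zero_mem⟩)
  have hJ := idealOf_isClosedRightIdeal h K hKs hKc
  have hJne : idealOf h K ≠ {0} := by
    intro heq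
    have hθc : h.theta x x ∈ compacts h :=
      subset_closure (Submodule.subset_span ⟨x, x, rfl⟩)
    have hθ : h.theta x x ∈ idealOf h K := by
      refine ⟨hθc, fun z => ?_⟩
      rw [h.theta_apply]
      exact hKs x hxK _
    rw [heq] at hθ
    have := smul_inner_self_ne_zero h hx0
    apply this
    have : h.theta x x x = (0 : M →L[ℂ] M) x := by rw [hθ]
    simpa [h.theta_apply] using this
  obtain ⟨T, ⟨hTN, hTK⟩, hT0⟩ := hTEideal (idealOf h K) hJ hJne
  obtain ⟨z, hz⟩ : ∃ z, T z ≠ 0 := by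
    by_contra hc
    push_neg at hc
    exact hT0 (by ext z; simpa using hc z)
  exact ⟨T z, ⟨hTN.2 z, hTK.2 z⟩, hz⟩
end

section
/- Let A be a commutative C*-algebra and M a Hilbert A-module. If N ⊂ M is a topologically essential closed submodule and m ∈ M, n ∈ N satisfy ma_k → n for some sequence a_k ∈ A with n ≠ 0, then m⟨n,n⟩ = n⟨n,m⟩ and this element is a nonzero member of N ∩ mA. -/
open Filter Topology

/-- Let `A` be a commutative C*-algebra and `M` a Hilbert
`A`-module. If `N ⊆ M` is a topologically essential closed submodule and `m ∈ M`,
`n ∈ N` satisfy `m·(a k) → n` for some sequence `a k ∈ A` with `n ≠ 0`, then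
`m⟨n,n⟩ = n⟨n,m⟩` and this element is a nonzero member of `N ∩ mA`. -/
theorem smul_inner_eq_of_tendsto {A M : Type*} [NonUnitalCStarAlgebra A]
    [PartialOrder A] [StarOrderedRing A] [NormedAddCommGroup M] [NormedSpace ℂ M]
    (hcomm : ∀ a b : A, a * b = b * a)
    (h : HilbertCStarModule A M)
    (N : Submodule ℂ M) (hNs : ∀ x ∈ N, ∀ a : A, h.smul x a ∈ N)
    (hNc : IsClosed (N : Set M))
    (hTE : ∀ K : Submodule ℂ M, (∀ x ∈ K, ∀ a : A, h.smul x a ∈ K) →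
      IsClosed (K : Set M) → K ≠ ⊥ → ∃ v, v ∈ N ⊓ K ∧ v ≠ 0)
    (m n : M) (hn : n ∈ N) (hn0 : n ≠ 0) (a : ℕ → A)
    (ha : Tendsto (fun k => h.smul m (a k)) atTop (𝓝 n)) :
    h.smul m (h.inner n n) = h.smul n (h.inner n m) ∧
    h.smul n (h.inner n m) ≠ 0 ∧
    h.smul n (h.inner n m) ∈ N ∧
    ∃ a' : A, h.smul m a' = h.smul n (h.inner n m) := by
  -- basic algebraic facts
  have smul_sub_left : ∀ (x y : M) (b : A), h.smul (x - y) b = h.smul x b - h.smul y b := by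
    intro x y b
    have := h.add_smul (x - y) y b
    rw [sub_add_cancel] at this
    rw [eq_sub_of_add_eq this.symm]
  have smul_sub_right : ∀ (x : M) (b c : A), h.smul x (b - c) = h.smul x b - h.smul x c := by
    intro x b c
    have := h.smul_add x (b - c) c
    rw [sub_add_cancel] at this
    rw [eq_sub_of_add_eq this.symm]
  have inner_sub_right : ∀ (x y z : M), h.inner x (y - z) = h.inner x y - h.inner x z := by
    intro x y z
    have := h.inner_add_right x (y - z) z
    rw [sub_add_cancel] at this
    rw [eq_sub_of_add_eq this.symm]
  -- continuity helpers
  have cont_smul_right : ∀ (x : M) (f : ℕ → A) (b : A), Tendsto f atTop (𝓝 b) →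
      Tendsto (fun k => h.smul x (f k)) atTop (𝓝 (h.smul x b)) := by
    intro x f b hf
    rw [tendsto_iff_norm_sub_tendsto_zero] at hf ⊢
    apply squeeze_zero (fun k => norm_nonneg _) (g := fun k => ‖x‖ * ‖f k - b‖)
    · intro k
      rw [← smul_sub_right]
      exact h.norm_smul_le x (f k - b)
    · simpa using hf.const_mul ‖x‖
  have cont_smul_left : ∀ (b : A) (f : ℕ → M) (x : M), Tendsto f atTop (𝓝 x) →
      Tendsto (fun k => h.smul (f k) b) atTop (𝓝 (h.smul x b)) := by
    intro b f x hf
    rw [tendsto_iff_norm_sub_tendsto_zero] at hf ⊢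
    apply squeeze_zero (fun k => norm_nonneg _) (g := fun k => ‖f k - x‖ * ‖b‖)
    · intro k
      rw [← smul_sub_left]
      exact h.norm_smul_le (f k - x) b
    · simpa using hf.mul_const ‖b‖
  have cont_inner_right : ∀ (x : M) (f : ℕ → M) (y : M), Tendsto f atTop (𝓝 y) →
      Tendsto (fun k => h.inner x (f k)) atTop (𝓝 (h.inner x y)) := by
    intro x f y hf
    rw [tendsto_iff_norm_sub_tendsto_zero] at hf ⊢
    apply squeeze_zero (fun k => norm_nonneg _) (g := fun k => ‖x‖ * ‖f k - y‖)
    · intro k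
      rw [← inner_sub_right]
      exact h.norm_inner_le x (f k - y)
    · simpa using hf.const_mul ‖x‖
  -- ⟨n, m a_k⟩ = ⟨n,m⟩ a_k → ⟨n,n⟩
  have hinA : Tendsto (fun k => h.inner n m * a k) atTop (𝓝 (h.inner n n)) := by
    have := cont_inner_right n _ n ha
    simpa only [h.inner_smul_right] using this
  -- limit 1 : m (⟨n,m⟩ a_k) → m ⟨n,n⟩
  have l1 : Tendsto (fun k => h.smul m (h.inner n m * a k)) atTop (𝓝 (h.smul m (h.inner n n))) :=
    cont_smul_right m _ _ hinA
  -- limit 2 : m (⟨n,m⟩ a_k) = (m a_k) ⟨n,m⟩ → n ⟨n,m⟩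
  have l2 : Tendsto (fun k => h.smul m (h.inner n m * a k)) atTop (𝓝 (h.smul n (h.inner n m))) := by
    have := cont_smul_left (h.inner n m) _ n ha
    simp only [h.smul_smul] at this
    convert this using 2 with k
    rw [hcomm]
  have eq1 : h.smul m (h.inner n n) = h.smul n (h.inner n m) := tendsto_nhds_unique l1 l2
  -- nonzeroness
  have hne : h.smul n (h.inner n m) ≠ 0 := by
    intro h0
    have l3 : Tendsto (fun k => h.smul n (h.inner n m * a k)) atTop (𝓝 (h.smul n (h.inner n n))) :=
      cont_smul_right n _ _ hinA
    have l4 : (fun k => h.smul n (h.inner n m * a k)) = fun _ => (0 : M) := by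
      funext k
      rw [← h.smul_smul, h0, h.zero_smul]
    rw [l4] at l3
    have hz : h.smul n (h.inner n n) = 0 := (tendsto_nhds_unique tendsto_const_nhds l3).symm
    have : h.inner n n * h.inner n n = 0 := by
      rw [← h.inner_smul_right, hz]
      have := h.inner_add_right n 0 0
      simpa using this.symm
    have hsa : star (h.inner n n) = h.inner n n := h.star_inner n n
    have : ‖h.inner n n‖ = 0 := by
      have hns : ‖h.inner n n‖ * ‖h.inner n n‖ = ‖star (h.inner n n) * h.inner n n‖ :=
        (CStarRing.norm_star_mul_self).symm
      rw [hsa, this, norm_zero] at hns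
      exact mul_self_eq_zero.mp hns
    exact hn0 (h.inner_self_eq_zero n (norm_eq_zero.mp this))
  exact ⟨eq1, hne, hNs n hn _, ⟨h.inner n n, eq1⟩⟩
end

section
/- Let X be a locally compact Hausdorff space, {H_x} a continuous field of Hilbert spaces over X vanishing at infinity, M = C_0(X, H) its module of continuous sections, and N = C_0(X, L) the closed submodule determined by a field of closed subspaces L_x ⊂ H_x. If for every m ∈ M the set Y_m = {x ∈ X : m(x) ∉ L_x} is nowhere dense in X, then N is an essential submodule of M. -/
open scoped ZeroAtInfty

/-- Let `X` be a locally compact Hausdorff space, `{H x}` a continuous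
field of Hilbert spaces over `X` vanishing at infinity, `M = C₀(X, H)` its module of
continuous sections (modelled as a set of dependent functions, stable under addition and
under pointwise multiplication by `C₀(X, ℂ)`, with continuous pointwise norm), and
`N = C₀(X, L)` the closed submodule determined by a field of closed subspaces
`L x ⊆ H x`. If for every `m ∈ M` the set `Y_m = {x : m x ∉ L x}` is nowhere dense,
then `N` is an essential submodule of `M`: every nonzero `m ∈ M` admits `a ∈ C₀(X, ℂ)`
with `a • m ∈ N` and `a • m ≠ 0`. -/
theorem essential_of_forall_nowhereDense {X : Type*} [TopologicalSpace X]
    [LocallyCompactSpace X] [T2Space X]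
    (H : X → Type*) [∀ x, NormedAddCommGroup (H x)] [∀ x, InnerProductSpace ℂ (H x)]
    [∀ x, CompleteSpace (H x)]
    (M : Set (∀ x, H x))
    (hM_add : ∀ m ∈ M, ∀ m' ∈ M, (fun x => m x + m' x) ∈ M)
    (hM_smul : ∀ m ∈ M, ∀ a : C₀(X, ℂ), (fun x => a x • m x) ∈ M)
    (hM_norm_cont : ∀ m ∈ M, Continuous fun x => ‖m x‖)
    (hM_zeroAtInfty : ∀ m ∈ M, Filter.Tendsto (fun x => ‖m x‖) (Filter.cocompact X) (nhds 0))
    (L : ∀ x, Submodule ℂ (H x)) (hL : ∀ x, IsClosed (L x : Set (H x)))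
    (hY : ∀ m ∈ M, IsNowhereDense {x : X | m x ∉ L x}) :
    ∀ m ∈ M, m ≠ 0 →
      ∃ a : C₀(X, ℂ), (∀ x, a x • m x ∈ L x) ∧ (fun x => a x • m x) ≠ 0 := by
  intro m hm hm0
  -- `m` is nonzero at some point, so `U = {x : ‖m x‖ > 0}` is open and nonempty.
  obtain ⟨x₀, hx₀⟩ : ∃ x, m x ≠ 0 := by
    by_contra h
    push_neg at h
    exact hm0 (funext h)
  set U : Set X := {x | 0 < ‖m x‖} with hU
  have hUopen : IsOpen U := isOpen_lt continuous_const (hM_norm_cont m hm)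
  have hx₀U : x₀ ∈ U := by simpa [hU] using norm_pos_iff.mpr hx₀
  -- the bad set is nowhere dense, so `U \ closure Y` is nonempty open
  have hnd := hY m hm
  set Y := {x : X | m x ∉ L x}
  have hVopen : IsOpen (U ∩ (closure Y)ᶜ) := hUopen.inter isClosed_closure.isOpen_compl
  have hVne : (U ∩ (closure Y)ᶜ).Nonempty := by
    by_contra h
    rw [Set.not_nonempty_iff_eq_empty] at h
    have : U ⊆ closure Y := by
      intro x hx
      by_contra hx'
      exact Set.eq_empty_iff_forall_notMem.mp h x ⟨hx, hx'⟩
    have : U ⊆ interior (closure Y) := hUopen.subset_interior_iff.mpr this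
    rw [hnd] at this
    exact this hx₀U
  obtain ⟨x₁, hx₁⟩ := hVne
  -- Urysohn bump supported in the open set
  obtain ⟨f, hf1, hf0, hfc, hf01⟩ :=
    exists_continuous_one_zero_of_isCompact (isCompact_singleton (x := x₁))
      hVopen.isClosed_compl (by simpa using hx₁)
  -- package `f` (as complex-valued) as an element of `C₀(X, ℂ)`
  refine ⟨⟨⟨fun x => (f x : ℂ), Complex.continuous_ofReal.comp f.continuous⟩, ?_⟩, ?_, ?_⟩
  · have : HasCompactSupport fun x => (f x : ℂ) :=
      hfc.comp_left (g := fun t : ℝ => (t : ℂ)) (by simp)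
    exact this.is_zero_at_infty
  · intro x
    by_cases hx : f x = 0
    · simp [hx]
    · have hxV : x ∈ U ∩ (closure Y)ᶜ := by
        by_contra hxV
        exact hx (hf0 hxV)
      have : m x ∈ L x := by
        have := hxV.2
        have hxY : x ∉ Y := fun h => this (subset_closure h)
        simpa [Y] using hxY
      exact (L x).smul_mem _ this
  · intro hzero
    have h1 : f x₁ = 1 := hf1 rfl
    have h2 := congrFun hzero x₁
    simp only [ZeroAtInftyContinuousMap.coe_mk, ContinuousMap.coe_mk, h1, Complex.ofReal_one,
      one_smul, Pi.zero_apply] at h2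
    exact (norm_pos_iff.mp hx₁.1) h2
end

section
/- Let X be a locally compact Hausdorff space, M = C_0(X, H) the continuous sections of a continuous field of Hilbert spaces vanishing at infinity, and N = C_0(X, L) a closed submodule given by a field of closed subspaces L_x. If there exists m ∈ M for which Y_m = {x : m(x) ∉ L_x} is not nowhere dense, then N is not an essential submodule: there exists a nonzero m' ∈ M such that every a ∈ C_0(X) with m'a ∈ N satisfies m'a = 0. -/
open scoped ZeroAtInfty

/-- Let `X` be a locally compact Hausdorff space, `M = C₀(X, H)` the
continuous sections of a continuous field of Hilbert spaces vanishing at infinity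
(modelled as a set of dependent functions with the natural closure properties), and
`N = C₀(X, L)` the closed submodule given by a field of closed subspaces `L x`. If there
exists `m ∈ M` for which `Y_m = {x : m x ∉ L x}` is *not* nowhere dense, then `N` is not
an essential submodule: there exists a nonzero `m' ∈ M` such that every `a ∈ C₀(X, ℂ)`
with `a • m' ∈ N` satisfies `a • m' = 0`. -/
theorem not_essential_of_not_nowhereDense {X : Type*} [TopologicalSpace X]
    [LocallyCompactSpace X] [T2Space X]
    (H : X → Type*) [∀ x, NormedAddCommGroup (H x)] [∀ x, InnerProductSpace ℂ (H x)]
    [∀ x, CompleteSpace (H x)]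
    (M : Set (∀ x, H x))
    (hM_add : ∀ m ∈ M, ∀ m' ∈ M, (fun x => m x + m' x) ∈ M)
    (hM_smul : ∀ m ∈ M, ∀ a : C₀(X, ℂ), (fun x => a x • m x) ∈ M)
    (hM_norm_cont : ∀ m ∈ M, Continuous fun x => ‖m x‖)
    (hM_zeroAtInfty : ∀ m ∈ M, Filter.Tendsto (fun x => ‖m x‖) (Filter.cocompact X) (nhds 0))
    (L : ∀ x, Submodule ℂ (H x)) (hL : ∀ x, IsClosed (L x : Set (H x)))
    (m : ∀ x, H x) (hm : m ∈ M)
    (hYm : ¬ IsNowhereDense {x : X | m x ∉ L x}) :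
    ∃ m' ∈ M, m' ≠ 0 ∧
      ∀ a : C₀(X, ℂ), (∀ x, a x • m' x ∈ L x) → (fun x => a x • m' x) = 0 := by
  set Y : Set X := {x : X | m x ∉ L x} with hY
  set U : Set X := interior (closure Y) with hU
  have hUopen : IsOpen U := isOpen_interior
  have hUne : U.Nonempty := by
    rw [Set.nonempty_iff_ne_empty]
    exact hYm
  -- pick a point of U ∩ Y
  obtain ⟨x₀, hx₀U⟩ := hUne
  have hx₀cl : x₀ ∈ closure Y := interior_subset hx₀U
  obtain ⟨x₁, hx₁Y, hx₁U⟩ : ∃ x₁, x₁ ∈ Y ∧ x₁ ∈ U := by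
    rcases mem_closure_iff.mp hx₀cl U hUopen hx₀U with ⟨x₁, hx₁U, hx₁Y⟩
    exact ⟨x₁, hx₁Y, hx₁U⟩
  -- Urysohn: f = 1 at x₁, f = 0 outside U, compact support
  obtain ⟨f, hf1, hf0, hfc, hf01⟩ :=
    exists_continuous_one_zero_of_isCompact (isCompact_singleton (x := x₁))
      (isClosed_compl_iff.mpr hUopen) (by simpa using hx₁U)
  -- build the C₀ function
  have hfC : Continuous fun x => (f x : ℂ) := Complex.continuous_ofReal.comp f.continuous
  have hfcs : HasCompactSupport fun x => (f x : ℂ) := by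
    exact HasCompactSupport.comp_left (g := Complex.ofReal) hfc Complex.ofReal_zero
  let a₀ : C₀(X, ℂ) := ⟨⟨fun x => (f x : ℂ), hfC⟩, hfcs.is_zero_at_infty⟩
  refine ⟨fun x => a₀ x • m x, hM_smul m hm a₀, ?_, ?_⟩
  · -- nonzero at x₁
    intro hcon
    have h1 : a₀ x₁ • m x₁ = 0 := congrFun hcon x₁
    have hfx₁ : f x₁ = 1 := hf1 rfl
    have hm1 : m x₁ ≠ 0 := fun h => hx₁Y (h ▸ (L x₁).zero_mem)
    rw [show a₀ x₁ = 1 by simp [a₀, hfx₁], one_smul] at h1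
    exact hm1 h1
  · intro a ha
    set m' : ∀ x, H x := fun x => a₀ x • m x with hm'
    -- a vanishes on Y' := {x | m' x ∉ L x}
    set Y' : Set X := {x : X | m' x ∉ L x} with hY'
    have haY' : ∀ x ∈ Y', a x = 0 := by
      intro x hx
      by_contra hax
      exact hx (by simpa [smul_smul, inv_mul_cancel₀ hax] using (L x).smul_mem (a x)⁻¹ (ha x))
    have haCl : ∀ x ∈ closure Y', a x = 0 := by
      intro x hx
      have : closure Y' ⊆ a ⁻¹' {0} :=
        closure_minimal (fun z hz => haY' z hz) (IsClosed.preimage a.continuous isClosed_singleton)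
      exact this hx
    -- key: {x | m' x ≠ 0} ⊆ closure Y'
    have hkey : ∀ x, m' x ≠ 0 → x ∈ closure Y' := by
      intro x hx
      have hfx : f x ≠ 0 := by
        intro h
        apply hx
        simp [hm', a₀, h]
      have hxU : x ∈ U := by
        by_contra hxc
        exact hfx (hf0 hxc)
      have hxcl : x ∈ closure Y := interior_subset hxU
      rw [mem_closure_iff] at hxcl ⊢
      intro V hV hxV
      have hopen : IsOpen (V ∩ {z | f z ≠ 0}) :=
        hV.inter (isOpen_compl_iff.mpr (isClosed_singleton.preimage f.continuous))
      rcases hxcl _ hopen ⟨hxV, hfx⟩ with ⟨z, ⟨hzV, hfz⟩, hzY⟩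
      refine ⟨z, hzV, ?_⟩
      intro hzL
      apply hzY
      have : ((f z : ℂ))⁻¹ • m' z ∈ L z := (L z).smul_mem _ hzL
      simpa [hm', a₀, ← Complex.coe_smul, smul_smul, inv_mul_cancel₀ (by exact_mod_cast hfz : (f z : ℂ) ≠ 0)]
        using this
    funext x
    by_cases hmx : m' x = 0
    · simp [hmx]
    · simp [haCl x (hkey x hmx)]
end

section
/- Let X be a set, H a Hilbert space with orthonormal basis (e_t)_{t∈X} indexed by X, and for each x ∈ X let L_x = (e_x)^⊥, the closed span of {e_t : t ≠ x}. If m : X → H is a continuous map from a compact topological space X to H, then the set {x ∈ X : m(x) ∉ L_x} = {x ∈ X : ⟨e_x, m(x)⟩ ≠ 0} is countable. -/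
open scoped InnerProductSpace

section

variable {𝕜 ι E : Type*} [RCLike 𝕜] [NormedAddCommGroup E] [InnerProductSpace 𝕜 E]
  {e : ι → E}

theorem Orthonormal.countable_setOf_inner_ne_zero (he : Orthonormal 𝕜 e) (v : E) :
    {i | ⟪e i, v⟫_𝕜 ≠ 0}.Countable := by
  simpa [Function.support] using (he.inner_products_summable v).countable_support

theorem Orthonormal.countable_setOf_exists_inner_ne_zero (he : Orthonormal 𝕜 e) {S : Set E}
    (hS : TopologicalSpace.IsSeparable S) : {i | ∃ v ∈ S, ⟪e i, v⟫_𝕜 ≠ 0}.Countable := by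
  obtain ⟨c, hc, hSc⟩ := hS
  refine (hc.biUnion fun w _ => he.countable_setOf_inner_ne_zero w).mono ?_
  rintro i ⟨v, hvS, hv⟩
  -- `{w | ⟪e i, w⟫ ≠ 0}` is an open neighbourhood of `v ∈ closure c`, so it meets `c`
  obtain ⟨w, hw, hwc⟩ := mem_closure_iff.1 (hSc hvS) _
    (isOpen_ne_fun (continuous_const.inner continuous_id) continuous_const) hv
  exact Set.mem_biUnion hwc hw

end

theorem countable_not_mem_orthogonal_general {X : Type*} [TopologicalSpace X] [CompactSpace X]
    {H : Type*} [NormedAddCommGroup H] [InnerProductSpace ℂ H]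
    (e : X → H) (he : Orthonormal ℂ e)
    (m : X → H) (hm : Continuous m) :
    Set.Countable {x : X | (inner ℂ (e x) (m x) : ℂ) ≠ 0} :=
  (he.countable_setOf_exists_inner_ne_zero (isCompact_range hm).isSeparable).mono
    (Set.ofPred_subset_ofPred.2 fun x hx => ⟨m x, Set.mem_range_self x, hx⟩)

/-- Let `X` be a set, `H` a Hilbert space with an orthonormal family
`(e t)_{t ∈ X}` indexed by `X`, and for each `x` let `L x = (e x)ᗮ`. If `m : X → H` is a
continuous map from a compact topological space `X` to `H`, then the set
`{x : m x ∉ L x} = {x : ⟪e x, m x⟫ ≠ 0}` is countable. -/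
theorem countable_not_mem_orthogonal {X : Type*} [TopologicalSpace X] [CompactSpace X]
    {H : Type*} [NormedAddCommGroup H] [InnerProductSpace ℂ H] [CompleteSpace H]
    (e : X → H) (he : Orthonormal ℂ e)
    (m : X → H) (hm : Continuous m) :
    Set.Countable {x : X | (inner ℂ (e x) (m x) : ℂ) ≠ 0} :=
  countable_not_mem_orthogonal_general e he m hm
end

section
/- Let X be a compact Hausdorff metric space (or any compact space in which countable sets are nowhere dense), H = ℓ²(X) with orthonormal basis (e_x)_{x∈X}, M = C(X, H) the module of continuous H-valued functions (a Hilbert C(X)-module with pointwise inner product), and N = {m ∈ M : ⟨e_x, m(x)⟩ = 0 for all x ∈ X}. If X has no isolated points and every countable subset of X is nowhere dense, then N is an essential submodule of M, even though L_x = e_x^⊥ ≠ H for every x ∈ X. -/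
/-!
The diagonal coefficients `⟪e x, m x⟫ = m x x` of a continuous `m : X → ℓ²(X)` vanish off a
countable set `Y`: the compact set `m(X)` is covered by finitely many `ε/2`-balls, and each
centre has only finitely many coordinates of size `≥ ε/2`. Hence `Y` is nowhere dense, the open
support of `m ≠ 0` contains a point `x₀ ∉ closure Y`, and an Urysohn function `a` vanishing on
`closure Y` with `a x₀ = 1` gives `a • m ∈ N` and `a • m ≠ 0`.
-/

open scoped ENNReal

namespace lp

variable {α : Type*} {E : α → Type*} [∀ i, NormedAddCommGroup (E i)] {p : ℝ≥0∞}
  [Fact (1 ≤ p)]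

lemma finite_setOf_le_norm_apply (hp : p ≠ ∞) (f : lp E p) {ε : ℝ} (hε : 0 < ε) :
    {i | ε ≤ ‖f i‖}.Finite := by
  have hp' : 0 < p.toReal := ENNReal.toReal_pos (zero_lt_one.trans_le Fact.out).ne' hp
  have hev := ((lp.memℓp f).summable hp').tendsto_cofinite_zero.eventually_lt_const
    (Real.rpow_pos_of_pos hε p.toReal)
  refine (Filter.eventually_cofinite.1 hev).subset fun i hi => ?_
  exact not_lt.2 (Real.rpow_le_rpow hε.le hi hp'.le)

lemma finite_setOf_exists_le_norm_apply_of_isCompact (hp : p ≠ ∞) {K : Set (lp E p)}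
    (hK : IsCompact K) {ε : ℝ} (hε : 0 < ε) :
    {i | ∃ f ∈ K, ε ≤ ‖f i‖}.Finite := by
  obtain ⟨t, -, ht, hKt⟩ := hK.finite_cover_balls (half_pos hε)
  refine (ht.biUnion fun c _ => finite_setOf_le_norm_apply hp c (half_pos hε)).subset ?_
  rintro i ⟨f, hfK, hfi⟩
  obtain ⟨c, hct, hfc⟩ := Set.mem_iUnion₂.1 (hKt hfK)
  refine Set.mem_iUnion₂.2 ⟨c, hct, ?_⟩
  have hdist : ‖f i - c i‖ < ε / 2 := calc
    ‖f i - c i‖ = ‖(f - c) i‖ := by rw [lp.coeFn_sub, Pi.sub_apply]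
    _ ≤ ‖f - c‖ := lp.norm_apply_le_norm (zero_lt_one.trans_le Fact.out).ne' _ i
    _ < ε / 2 := by rwa [← dist_eq_norm]
  have := norm_sub_norm_le (f i) (c i)
  show ε / 2 ≤ ‖c i‖
  linarith

lemma countable_setOf_exists_apply_ne_zero_of_isCompact (hp : p ≠ ∞) {K : Set (lp E p)}
    (hK : IsCompact K) : {i | ∃ f ∈ K, f i ≠ 0}.Countable := by
  refine (Set.countable_iUnion fun n : ℕ => (finite_setOf_exists_le_norm_apply_of_isCompact hp hK
    (Nat.one_div_pos_of_nat (n := n))).countable).mono ?_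
  rintro i ⟨f, hfK, hfi⟩
  obtain ⟨n, hn⟩ := exists_nat_one_div_lt (norm_pos_iff.2 hfi)
  exact Set.mem_iUnion.2 ⟨n, f, hfK, hn.le⟩

lemma countable_setOf_apply_self_ne_zero {X : Type*} [TopologicalSpace X] [CompactSpace X]
    {E : Type*} [NormedAddCommGroup E] (hp : p ≠ ∞) (m : C(X, lp (fun _ : X => E) p)) :
    {x | m x x ≠ 0}.Countable := by
  refine (countable_setOf_exists_apply_ne_zero_of_isCompact hp
    (isCompact_range m.continuous)).mono ?_
  exact fun x hx => ⟨m x, Set.mem_range_self x, hx⟩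

end lp

lemma IsNowhereDense.exists_mem_notMem_closure {X : Type*} [TopologicalSpace X] {s U : Set X}
    (hs : IsNowhereDense s) (hU : IsOpen U) (hne : U.Nonempty) : ∃ x ∈ U, x ∉ closure s :=
  (interior_eq_empty_iff_dense_compl.1 hs).inter_open_nonempty U hU hne

theorem essential_in_nonseparable_field_general {X : Type*} [TopologicalSpace X] [CompactSpace X]
    [T2Space X] [DecidableEq X]
    (hctble : ∀ s : Set X, s.Countable → IsNowhereDense s) :
    letI H := lp (fun _ : X => ℂ) 2
    letI e : X → H := fun x => lp.single 2 x 1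
    (∀ x : X, ∃ v : H, (inner ℂ (e x) v : ℂ) ≠ 0) ∧
    ∀ m : C(X, H), m ≠ 0 →
      ∃ a : C(X, ℂ), (∀ x : X, (inner ℂ (e x) (a x • m x) : ℂ) = 0) ∧
        (fun x : X => a x • m x) ≠ 0 := by
  refine ⟨fun x => ⟨lp.single 2 x 1, by simp⟩, fun m hm => ?_⟩
  set Y := {x | m x x ≠ 0}
  have hY : IsNowhereDense Y :=
    hctble Y (lp.countable_setOf_apply_self_ne_zero (by norm_num) m)
  obtain ⟨x₁, hx₁⟩ : ∃ x, m x ≠ 0 := by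
    by_contra! h
    exact hm (ContinuousMap.ext h)
  obtain ⟨x₀, hmx₀, hx₀⟩ :=
    hY.exists_mem_notMem_closure (isOpen_ne_fun m.continuous continuous_const) ⟨x₁, hx₁⟩
  obtain ⟨f, hf0, hf1, -⟩ := exists_continuous_zero_one_of_isClosed isClosed_closure
    isClosed_singleton (Set.disjoint_singleton_right.2 hx₀)
  refine ⟨(ContinuousMap.mk ((↑) : ℝ → ℂ) Complex.continuous_ofReal).comp f, fun x => ?_,
    fun h => hmx₀ ?_⟩
  · by_cases hx : x ∈ Y
    · simp [hf0 (subset_closure hx)]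
    · simp [lp.inner_single_left, not_not.1 hx]
  · simpa [hf1 rfl] using congrFun h x₀

/-- Let `X` be a compact Hausdorff space in which every countable set
is nowhere dense (e.g. a compact metric space without isolated points), `H = ℓ²(X)` with
its standard orthonormal basis `(e x)_{x ∈ X}`, `M = C(X, H)` the Hilbert `C(X)`-module
of continuous `H`-valued functions, and `N = {m : ⟪e x, m x⟫ = 0 ∀ x}` the closed
submodule of sections valued in `L x = (e x)ᗮ`. If `X` has no isolated points and every
countable subset of `X` is nowhere dense, then `N` is an essential submodule of `M` —
for every nonzero `m ∈ C(X, H)` there is `a ∈ C(X, ℂ)` with `a • m ∈ N` and `a • m ≠ 0` —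
even though `L x = (e x)ᗮ ≠ H` for every `x`. -/
theorem essential_in_nonseparable_field {X : Type*} [TopologicalSpace X] [CompactSpace X]
    [T2Space X] [DecidableEq X]
    (hiso : ∀ x : X, ¬ IsOpen ({x} : Set X))
    (hctble : ∀ s : Set X, s.Countable → IsNowhereDense s) :
    letI H := lp (fun _ : X => ℂ) 2
    letI e : X → H := fun x => lp.single 2 x 1
    (∀ x : X, ∃ v : H, (inner ℂ (e x) v : ℂ) ≠ 0) ∧
    ∀ m : C(X, H), m ≠ 0 →
      ∃ a : C(X, ℂ), (∀ x : X, (inner ℂ (e x) (a x • m x) : ℂ) = 0) ∧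
        (fun x : X => a x • m x) ≠ 0 :=
  essential_in_nonseparable_field_general hctble
end
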